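/- Let A be a Hilbert algebra and J a monomial filter of A. Define φ : A → A by letting φ(a) be the greatest element of the class a/J = {x ∈ A : x → a ∈ J and a → x ∈ J}. Then φ is a closure endomorphism of A and its kernel {x ∈ A : φ(x) = 1} equals J. -/
import Mathlib


/-- A Hilbert algebra: a set with implication `imp` and constant `one`. -/
class HilbertAlgebra (A : Type*) where
  imp : A → A → A
  one : A
  imp_one : ∀ x y : A, imp x (imp y x) = one
  imp_distrib : ∀ x y z : A,
    imp (imp x (imp y z)) (imp (imp x y) (imp x z)) = one
  imp_antisymm : ∀ x y : A, imp x y = one → imp y x = one → x = y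

namespace HilbertAlgebra

variable {A : Type*} [HilbertAlgebra A]

/-- The natural order of a Hilbert algebra: `x ≤ y` iff `x → y = 1`. -/
def le (x y : A) : Prop := imp x y = one

/-- A closure endomorphism: an endomorphism that is also a closure operator. -/
def IsClosureEndo (φ : A → A) : Prop :=
  (∀ x y : A, φ (imp x y) = imp (φ x) (φ y)) ∧
  (∀ x : A, le x (φ x)) ∧
  (∀ x : A, φ (φ x) = φ x) ∧
  (∀ x y : A, le x y → le (φ x) (φ y))

/-- A filter of a Hilbert algebra. -/
def IsFilter (J : Set A) : Prop :=
  (one : A) ∈ J ∧ ∀ x y : A, x ∈ J → imp x y ∈ J → y ∈ J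

theorem imp_top (x : A) : imp x one = one := by
  apply imp_antisymm
  · calc imp (imp x one) one
        = imp (imp x one) (imp one (imp x one)) := by rw [imp_one one x]
      _ = one := imp_one (imp x one) one
  · exact imp_one one x

theorem mp1 {b : A} (h : imp one b = one) : b = one :=
  imp_antisymm b one (imp_top b) h

theorem mp {a b : A} (ha : a = one) (h : imp a b = one) : b = one :=
  mp1 (ha ▸ h)

theorem imp_refl (x : A) : imp x x = one := by
  have h1 : imp x (imp (imp one x) x) = one := imp_one x (imp one x)
  have h2 := imp_distrib x (imp one x) x
  exact mp (imp_one x one) (mp h1 h2)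

theorem one_imp (x : A) : imp one x = x := by
  apply imp_antisymm
  · have h1 := imp_distrib (imp one x) one x
    have h2 := mp (imp_refl (imp one x)) h1
    exact mp (imp_top (imp one x)) h2
  · exact imp_one x one

theorem le_trans' {x y z : A} (h1 : imp x y = one) (h2 : imp y z = one) :
    imp x z = one := by
  have ha : imp x (imp y z) = one := by rw [h2]; exact imp_top x
  exact mp h1 (mp ha (imp_distrib x y z))

theorem mono_prefix {a b : A} (h : imp a b = one) (c : A) :
    imp (imp c a) (imp c b) = one :=
  mp (by rw [h]; exact imp_top c) (imp_distrib c a b)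

theorem B1 (x y z : A) : imp (imp y z) (imp (imp x y) (imp x z)) = one :=
  le_trans' (imp_one (imp y z) x) (imp_distrib x y z)

theorem antitone' {a b : A} (h : imp a b = one) (c : A) :
    imp (imp b c) (imp a c) = one := by
  have h1 := B1 a b c
  rw [h, one_imp] at h1
  exact h1

theorem exchange (x y z : A) : imp x (imp y z) = imp y (imp x z) := by
  apply imp_antisymm
  · exact le_trans' (imp_distrib x y z) (antitone' (imp_one y x) (imp x z))
  · exact le_trans' (imp_distrib y x z) (antitone' (imp_one x y) (imp y z))

theorem B2 (x y z : A) : imp (imp x y) (imp (imp y z) (imp x z)) = one := by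
  rw [exchange (imp x y) (imp y z) (imp x z)]
  exact B1 x y z

/-- If `J` is a monomial filter and `φ a` is the greatest element of the class
`a/J` for every `a`, then `φ` is a closure endomorphism whose kernel is `J`. -/
theorem closureEndo_of_monomial_filter (J : Set A) (hJ : IsFilter J) (φ : A → A)
    (hmax : ∀ a : A,
      φ a ∈ {x : A | imp x a ∈ J ∧ imp a x ∈ J} ∧
      ∀ x ∈ {x : A | imp x a ∈ J ∧ imp a x ∈ J}, le x (φ a)) :
    IsClosureEndo φ ∧ {x : A | φ x = one} = J := by
  obtain ⟨h1J, hmpJ⟩ := hJ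
  have Jup : ∀ {a b : A}, a ∈ J → imp a b = one → b ∈ J := by
    intro a b ha h
    exact hmpJ a b ha (by rw [h]; exact h1J)
  have compJ : ∀ {a b c : A}, imp a b ∈ J → imp b c ∈ J → imp a c ∈ J := by
    intro a b c h1 h2
    exact hmpJ _ _ h1 (Jup h2 (B1 a b c))
  have hm1 : ∀ a : A, imp (φ a) a ∈ J := fun a => (hmax a).1.1
  have hm2 : ∀ a : A, imp a (φ a) ∈ J := fun a => (hmax a).1.2
  have hub : ∀ a x : A, imp x a ∈ J → imp a x ∈ J → imp x (φ a) = one :=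
    fun a x h1 h2 => (hmax a).2 x ⟨h1, h2⟩
  have hrefl_mem : ∀ x : A, imp x x ∈ J := fun x => by
    rw [imp_refl]; exact h1J
  have hxle : ∀ x : A, imp x (φ x) = one :=
    fun x => hub x x (hrefl_mem x) (hrefl_mem x)
  have hphi1 : φ one = one :=
    imp_antisymm _ _ (imp_top _) (hub one one (hrefl_mem one) (hrefl_mem one))
  have congJ : ∀ {a b c d : A}, imp b a ∈ J → imp c d ∈ J →
      imp (imp a c) (imp b d) ∈ J := by
    intro a b c d h1 h2
    exact compJ (Jup h1 (B2 b a c)) (Jup h2 (B1 b c d))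
  -- `j → φ y = φ y` for `j ∈ J`
  have hP : ∀ (y : A), ∀ j ∈ J, imp j (φ y) = φ y := by
    intro y j hj
    apply imp_antisymm
    · apply hub y (imp j (φ y))
      · have hjj : imp j (imp (imp j (φ y)) (φ y)) = one := by
          rw [exchange j (imp j (φ y)) (φ y)]
          exact imp_refl _
        exact compJ (Jup hj hjj) (hm1 y)
      · have h : imp y (imp j (φ y)) = one :=
          le_trans' (hxle y) (imp_one (φ y) j)
        rw [h]; exact h1J
    · exact imp_one (φ y) j
  -- the endomorphism property
  have hendo : ∀ x y : A, φ (imp x y) = imp (φ x) (φ y) := by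
    intro x y
    have m1 : imp (imp (φ x) (φ y)) (imp x y) ∈ J := congJ (hm2 x) (hm1 y)
    have m2 : imp (imp x y) (imp (φ x) (φ y)) ∈ J := congJ (hm1 x) (hm2 y)
    have h_ab_c : imp (imp (φ x) (φ y)) (φ (imp x y)) = one :=
      hub (imp x y) (imp (φ x) (φ y)) m1 m2
    have hs : imp (φ (imp x y)) (imp (φ x) (φ y)) ∈ J :=
      compJ (hm1 (imp x y)) m2
    have hk : imp (φ (imp x y)) (imp (φ x) y) ∈ J :=
      compJ hs (Jup (hm1 y) (B1 (φ x) (φ y) y))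
    have hkle : imp (imp (φ (imp x y)) (imp (φ x) y))
        (imp (φ (imp x y)) (imp (φ x) (φ y))) = one :=
      mono_prefix (mono_prefix (hxle y) (φ x)) (φ (imp x y))
    have hb' : imp (imp (φ (imp x y)) (imp (φ x) y)) (φ y) = φ y :=
      hP y _ hk
    have h_c_ab : imp (φ (imp x y)) (imp (φ x) (φ y)) = one := by
      calc imp (φ (imp x y)) (imp (φ x) (φ y))
          = imp (φ (imp x y))
              (imp (φ x) (imp (imp (φ (imp x y)) (imp (φ x) y)) (φ y))) := by
            rw [hb']
        _ = imp (φ (imp x y))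
              (imp (imp (φ (imp x y)) (imp (φ x) y)) (imp (φ x) (φ y))) := by
            rw [exchange (φ x) (imp (φ (imp x y)) (imp (φ x) y)) (φ y)]
        _ = imp (imp (φ (imp x y)) (imp (φ x) y))
              (imp (φ (imp x y)) (imp (φ x) (φ y))) := by
            rw [exchange (φ (imp x y)) (imp (φ (imp x y)) (imp (φ x) y))
              (imp (φ x) (φ y))]
        _ = one := hkle
    exact imp_antisymm _ _ h_c_ab h_ab_c
  have hidem : ∀ x : A, φ (φ x) = φ x := by
    intro x
    have h1 : imp (φ (φ x)) x ∈ J := compJ (hm1 (φ x)) (hm1 x)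
    have h2 : imp x (φ (φ x)) ∈ J := compJ (hm2 x) (hm2 (φ x))
    exact imp_antisymm _ _ (hub x (φ (φ x)) h1 h2) (hxle (φ x))
  have hmono : ∀ x y : A, le x y → le (φ x) (φ y) := by
    intro x y hxy
    have hxy' : imp x y = one := hxy
    show imp (φ x) (φ y) = one
    rw [← hendo, hxy', hphi1]
  refine ⟨⟨hendo, fun x => hxle x, hidem, hmono⟩, ?_⟩
  ext x
  simp only [Set.mem_setOf_eq]
  constructor
  · intro h
    have hx := hm1 x
    rw [h, one_imp] at hx
    exact hx
  · intro hx
    have hle : imp one (φ x) = one := by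
      apply hub x one
      · rw [one_imp]; exact hx
      · rw [imp_top]; exact h1J
    exact imp_antisymm _ _ (imp_top _) hle

end HilbertAlgebra
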